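/- For every γ ∈ [0,1], the function H_γ : Z → ℝ defined by H_γ(z) = γ(|α|² − r²) + (1 − γ)(|β|² − s²) + 2√(γ(1 − γ))·‖M₀(z)‖_n is convex on Z. -/

import Mathlib

open Matrix

noncomputable section

/-- Vectors in ℝ³. -/
abbrev V3 := Fin 3 → ℝ
/-- 3×3 real matrices. -/
abbrev Mat3 := Matrix (Fin 3) (Fin 3) ℝ
/-- The state space Z = ℝ³ × ℝ³ × ℝ^{3×3}. -/
abbrev Z := V3 × V3 × Mat3

/-- Euclidean dot product on ℝ³. -/
def dot3 (u v : V3) : ℝ := ∑ i, u i * v i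
/-- Euclidean norm on ℝ³. -/
def norm3 (v : V3) : ℝ := Real.sqrt (dot3 v v)
/-- Outer (tensor) product u ⊗ v. -/
def outer (u v : V3) : Mat3 := Matrix.vecMulVec u v

/-- The constraint set K_{r,s}. -/
def Krs (r s p : ℝ) : Set Z :=
  {z | z.2.2 = outer z.1 z.2.1 + p • (1 : Mat3) ∧ norm3 z.1 = r ∧ norm3 z.2.1 = s}

/-- The wave cone Λ. -/
def waveCone : Set Z :=
  {z | ∃ (ξ : V3) (c : ℝ), ξ ≠ 0 ∧ z.2.2 *ᵥ ξ + c • z.1 = 0 ∧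
    z.2.2ᵀ *ᵥ ξ + c • z.2.1 = 0 ∧ dot3 z.1 ξ = 0 ∧ dot3 z.2.1 ξ = 0}

/-- M₀(z) = α⊗β − M + p·Id. -/
def M0 (p : ℝ) (z : Z) : Mat3 := outer z.1 z.2.1 - z.2.2 + p • (1 : Mat3)

/-- G(z) = √((r² − |α|²)(s² − |β|²)). -/
def Gfun (r s : ℝ) (z : Z) : ℝ :=
  Real.sqrt ((r ^ 2 - norm3 z.1 ^ 2) * (s ^ 2 - norm3 z.2.1 ^ 2))

/-- Iterated lamination sets K_{r,s}^{Λ,i}. -/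
def lamSet (r s p : ℝ) : ℕ → Set Z
  | 0 => Krs r s p
  | (i + 1) => {z | ∃ zb ∈ waveCone, ∃ t₁ t₂ : ℝ, t₁ ≤ 0 ∧ 0 ≤ t₂ ∧
      z + t₁ • zb ∈ lamSet r s p i ∧ z + t₂ • zb ∈ lamSet r s p i}

/-- Nuclear norm: trace of the PSD square root of AᵀA. -/
def nuclearNorm (A : Mat3) : ℝ :=
  ((Matrix.posSemidef_conjTranspose_mul_self A).1.eigenvectorUnitary.1 *
    Matrix.diagonal ((RCLike.ofReal : ℝ → ℝ) ∘ Real.sqrt ∘ (Matrix.posSemidef_conjTranspose_mul_self A).1.eigenvalues) *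
    (star (Matrix.posSemidef_conjTranspose_mul_self A).1.eigenvectorUnitary : Mat3)).trace

/-- f₀(A) = (A₂₃, A₃₁, A₁₂) (0-indexed: (A 1 2, A 2 0, A 0 1)). -/
def f0 (A : Mat3) : V3 := ![A 1 2, A 2 0, A 0 1]

/-- Frobenius norm of a matrix. -/
def frobNorm (A : Mat3) : ℝ := Real.sqrt (∑ i, ∑ j, A i j ^ 2)

/-- Λ-convexity of a set. -/
def LambdaConvex (S : Set Z) : Prop :=
  ∀ z₁ ∈ S, ∀ z₂ ∈ S, z₁ - z₂ ∈ waveCone →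
    ∀ t : ℝ, t ∈ Set.Icc (0 : ℝ) 1 → z₁ + t • (z₂ - z₁) ∈ S

/-- The Λ-convex hull of K_{r,s}: the intersection of all Λ-convex sets containing it. -/
def lambdaHull (r s p : ℝ) : Set Z := ⋂₀ {S : Set Z | LambdaConvex S ∧ Krs r s p ⊆ S}

def hpsd (A : Mat3) : (Aᴴ * A).PosSemidef := Matrix.posSemidef_conjTranspose_mul_self A
def Vm (A : Mat3) : Mat3 := ((hpsd A).1.eigenvectorUnitary : Mat3)
def ev (A : Mat3) : Fin 3 → ℝ := (hpsd A).1.eigenvalues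

lemma ev_nonneg (A : Mat3) (i : Fin 3) : 0 ≤ ev A i := (hpsd A).eigenvalues_nonneg i

lemma Vm_star_mul (A : Mat3) : star (Vm A) * Vm A = 1 := by
  simpa [Vm] using Matrix.mem_unitaryGroup_iff'.mp ((hpsd A).1.eigenvectorUnitary).2

lemma Vm_mul_star (A : Mat3) : Vm A * star (Vm A) = 1 := by
  simpa [Vm] using Matrix.mem_unitaryGroup_iff.mp ((hpsd A).1.eigenvectorUnitary).2

lemma spectralA (A : Mat3) : Aᴴ * A = Vm A * diagonal (ev A) * star (Vm A) := by
  have := (hpsd A).1.spectral_theorem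
  simpa [Vm, ev] using this

lemma nn_eq (A : Mat3) : nuclearNorm A = ∑ i, Real.sqrt (ev A i) := by
  change (Vm A * diagonal (Real.sqrt ∘ ev A) * star (Vm A)).trace = _
  rw [trace_mul_cycle, Vm_star_mul, one_mul, trace_diagonal]
  rfl

/-- column i of Vm A -/
def colV (A : Mat3) (i : Fin 3) : V3 := fun k => Vm A k i

lemma colV_ortho (A : Mat3) (i j : Fin 3) :
    colV A i ⬝ᵥ colV A j = if i = j then 1 else 0 := by
  have h := congr_fun (congr_fun (Vm_star_mul A) i) j
  simpa [Matrix.mul_apply, Matrix.one_apply, dotProduct, colV,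
    Matrix.star_apply, conjTranspose_apply] using h

lemma eig_colV (A : Mat3) (i : Fin 3) :
    (Aᴴ * A) *ᵥ colV A i = ev A i • colV A i := by
  have h : (Aᴴ * A) * Vm A = Vm A * diagonal (ev A) := by
    rw [spectralA, mul_assoc, mul_assoc, Vm_star_mul, mul_one]
  funext k
  have h2 := congr_fun (congr_fun h k) i
  rw [Matrix.mul_apply, Matrix.mul_diagonal] at h2
  simpa [mulVec, dotProduct, colV, mul_comm] using h2

lemma dp_AA (A : Mat3) (x y : V3) :
    (A *ᵥ x) ⬝ᵥ (A *ᵥ y) = x ⬝ᵥ ((Aᴴ * A) *ᵥ y) := by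
  have hA : Aᴴ = Aᵀ := by ext i j; simp [conjTranspose_apply]
  conv_rhs => rw [hA, ← mulVec_mulVec, dotProduct_mulVec, vecMul_transpose]

lemma norm_AcolV (A : Mat3) (i : Fin 3) :
    (A *ᵥ colV A i) ⬝ᵥ (A *ᵥ colV A i) = ev A i := by
  rw [dp_AA, eig_colV]
  have h : colV A i ⬝ᵥ colV A i = 1 := by simpa using colV_ortho A i i
  simp only [dotProduct_smul, smul_eq_mul, h, mul_one]

lemma trace_eq_sum_colV (A M : Mat3) :
    M.trace = ∑ i, colV A i ⬝ᵥ (M *ᵥ colV A i) := by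
  have h : ∀ i, colV A i ⬝ᵥ (M *ᵥ colV A i) = (star (Vm A) * M * Vm A) i i := by
    intro i
    simp only [Matrix.mul_apply, mulVec, dotProduct, colV, Matrix.star_apply,
      conjTranspose_apply, star_trivial, Finset.sum_mul, Finset.mul_sum]
    rw [Finset.sum_comm]
    exact Finset.sum_congr rfl fun k _ => Finset.sum_congr rfl fun l _ => by ring
  simp only [h]
  have : (∑ i, (star (Vm A) * M * Vm A) i i) = (star (Vm A) * M * Vm A).trace := rfl
  rw [this, trace_mul_cycle, Vm_mul_star, one_mul]

lemma dp_self_nonneg (x : V3) : 0 ≤ x ⬝ᵥ x := by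
  exact Finset.sum_nonneg fun i _ => mul_self_nonneg _

lemma cs3 (x y : V3) : x ⬝ᵥ y ≤ Real.sqrt (x ⬝ᵥ x) * Real.sqrt (y ⬝ᵥ y) := by
  have h : (x ⬝ᵥ y) ^ 2 ≤ (x ⬝ᵥ x) * (y ⬝ᵥ y) := by
    simp only [dotProduct, Fin.sum_univ_three]
    nlinarith [sq_nonneg (x 0 * y 1 - x 1 * y 0), sq_nonneg (x 0 * y 2 - x 2 * y 0),
      sq_nonneg (x 1 * y 2 - x 2 * y 1)]
  calc x ⬝ᵥ y ≤ |x ⬝ᵥ y| := le_abs_self _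
    _ = Real.sqrt ((x ⬝ᵥ y) ^ 2) := (Real.sqrt_sq_eq_abs _).symm
    _ ≤ Real.sqrt ((x ⬝ᵥ x) * (y ⬝ᵥ y)) := Real.sqrt_le_sqrt h
    _ = _ := Real.sqrt_mul (dp_self_nonneg x) _

lemma sqrt_dp_mulVec_le (U : Mat3) (hU : ∀ x : V3, (U *ᵥ x) ⬝ᵥ (U *ᵥ x) ≤ x ⬝ᵥ x) (x : V3) :
    Real.sqrt ((U *ᵥ x) ⬝ᵥ (U *ᵥ x)) ≤ Real.sqrt (x ⬝ᵥ x) :=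
  Real.sqrt_le_sqrt (hU x)

lemma dual_le (A U : Mat3) (hU : ∀ x : V3, (U *ᵥ x) ⬝ᵥ (U *ᵥ x) ≤ x ⬝ᵥ x) :
    (U * A).trace ≤ nuclearNorm A := by
  rw [nn_eq, trace_eq_sum_colV A]
  refine Finset.sum_le_sum fun i _ => ?_
  have h1 : (U * A) *ᵥ colV A i = U *ᵥ (A *ᵥ colV A i) := (mulVec_mulVec _ _ _).symm
  rw [h1]
  calc colV A i ⬝ᵥ (U *ᵥ (A *ᵥ colV A i))
      ≤ Real.sqrt (colV A i ⬝ᵥ colV A i) *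
        Real.sqrt ((U *ᵥ (A *ᵥ colV A i)) ⬝ᵥ (U *ᵥ (A *ᵥ colV A i))) := cs3 _ _
    _ ≤ 1 * Real.sqrt ((A *ᵥ colV A i) ⬝ᵥ (A *ᵥ colV A i)) := by
        refine mul_le_mul ?_ (sqrt_dp_mulVec_le U hU _) (Real.sqrt_nonneg _) one_pos.le
        have h : colV A i ⬝ᵥ colV A i = 1 := by simpa using colV_ortho A i i
        rw [h, Real.sqrt_one]
    _ = Real.sqrt (ev A i) := by rw [one_mul, norm_AcolV]

lemma spectralA' (A : Mat3) : star (Vm A) * (Aᴴ * A) * Vm A = diagonal (ev A) := by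
  rw [spectralA]
  calc star (Vm A) * (Vm A * diagonal (ev A) * star (Vm A)) * Vm A
      = (star (Vm A) * Vm A) * diagonal (ev A) * (star (Vm A) * Vm A) := by
        simp only [mul_assoc]
    _ = diagonal (ev A) := by rw [Vm_star_mul, one_mul, mul_one]

lemma starV_mul_AHA (A : Mat3) :
    star (Vm A) * (Aᴴ * A) = diagonal (ev A) * star (Vm A) := by
  rw [spectralA]
  calc star (Vm A) * (Vm A * diagonal (ev A) * star (Vm A))
      = (star (Vm A) * Vm A) * (diagonal (ev A) * star (Vm A)) := by
        simp only [mul_assoc]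
    _ = diagonal (ev A) * star (Vm A) := by rw [Vm_star_mul, one_mul]

lemma diag_conjT (d : Fin 3 → ℝ) : (diagonal d)ᴴ = diagonal d := by
  have hsd : star d = d := funext fun i => star_trivial _
  rw [diagonal_conjTranspose, hsd]

lemma dmerge (B C : Mat3) (d e : Fin 3 → ℝ) :
    B * diagonal d * (diagonal e * C) = B * diagonal (fun i => d i * e i) * C := by
  rw [← mul_assoc, mul_assoc B, diagonal_mul_diagonal]

lemma dmerge2 (B : Mat3) (d e : Fin 3 → ℝ) :
    B * diagonal d * diagonal e = B * diagonal (fun i => d i * e i) := by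
  rw [mul_assoc, diagonal_mul_diagonal]

lemma sand (A B C : Mat3) (d e : Fin 3 → ℝ) :
    B * diagonal d * star (Vm A) * (Vm A * diagonal e * C)
      = B * diagonal (fun i => d i * e i) * C := by
  calc B * diagonal d * star (Vm A) * (Vm A * diagonal e * C)
      = B * diagonal d * ((star (Vm A) * Vm A) * (diagonal e * C)) := by
        simp only [mul_assoc]
    _ = B * diagonal d * (diagonal e * C) := by rw [Vm_star_mul, one_mul]
    _ = B * diagonal (fun i => d i * e i) * C := dmerge B C d e

lemma sand2 (A B C : Mat3) :
    B * (star (Vm A) * Aᴴ) * (A * Vm A * C) = B * diagonal (ev A) * C := by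
  calc B * (star (Vm A) * Aᴴ) * (A * Vm A * C)
      = B * ((star (Vm A) * (Aᴴ * A) * Vm A) * C) := by simp only [mul_assoc]
    _ = B * (diagonal (ev A) * C) := by rw [spectralA']
    _ = B * diagonal (ev A) * C := by rw [← mul_assoc]

lemma sand2' (A B : Mat3) :
    B * (star (Vm A) * Aᴴ) * A = B * diagonal (ev A) * star (Vm A) := by
  calc B * (star (Vm A) * Aᴴ) * A = B * (star (Vm A) * (Aᴴ * A)) := by
        simp only [mul_assoc]
    _ = B * (diagonal (ev A) * star (Vm A)) := by rw [starV_mul_AHA]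
    _ = B * diagonal (ev A) * star (Vm A) := by rw [← mul_assoc]

lemma exists_dual (A : Mat3) : ∃ U : Mat3,
    (∀ x : V3, (U *ᵥ x) ⬝ᵥ (U *ᵥ x) ≤ x ⬝ᵥ x) ∧ (U * A).trace = nuclearNorm A := by
  classical
  set c : Fin 3 → ℝ := fun i => if ev A i = 0 then 0 else (Real.sqrt (ev A i))⁻¹ with hc
  set U : Mat3 := Vm A * diagonal c * star (Vm A) * Aᴴ with hUdef
  set P : Mat3 := A * Vm A * diagonal (fun i => c i * c i) * (star (Vm A) * Aᴴ) with hPdef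
  have hcev : ∀ i, c i * ev A i = Real.sqrt (ev A i) := by
    intro i
    by_cases h : ev A i = 0
    · simp [hc, h]
    · have hnn := ev_nonneg A i
      have hs : Real.sqrt (ev A i) * Real.sqrt (ev A i) = ev A i :=
        Real.mul_self_sqrt hnn
      have hsne : Real.sqrt (ev A i) ≠ 0 := by
        intro h0; rw [h0, mul_zero] at hs; exact h hs.symm
      simp only [hc, if_neg h]
      field_simp
      exact (Real.sq_sqrt hnn).symm
  have hcc : ∀ i, c i * c i * (ev A i * (c i * c i)) = c i * c i := by
    intro i
    by_cases h : ev A i = 0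
    · simp [hc, h]
    · have hnn := ev_nonneg A i
      have hs : Real.sqrt (ev A i) * Real.sqrt (ev A i) = ev A i :=
        Real.mul_self_sqrt hnn
      have hsne : Real.sqrt (ev A i) ≠ 0 := by
        intro h0; rw [h0, mul_zero] at hs; exact h hs.symm
      simp only [hc, if_neg h]
      field_simp
      exact (Real.sq_sqrt hnn).symm
  have hUH : Uᴴ = A * Vm A * diagonal c * star (Vm A) := by
    rw [hUdef]
    simp only [conjTranspose_mul, conjTranspose_conjTranspose, diag_conjT,
      star_eq_conjTranspose]
    simp only [← mul_assoc]
  have hU2 : U = Vm A * diagonal c * (star (Vm A) * Aᴴ) := by rw [hUdef, mul_assoc]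
  have hUU : Uᴴ * U = P := by
    rw [hUH, hUdef, hPdef]
    calc A * Vm A * diagonal c * star (Vm A) * (Vm A * diagonal c * star (Vm A) * Aᴴ)
        = A * Vm A * diagonal c * star (Vm A) * (Vm A * diagonal c * (star (Vm A) * Aᴴ)) := by
          simp only [mul_assoc]
      _ = A * Vm A * diagonal (fun i => c i * c i) * (star (Vm A) * Aᴴ) :=
          sand A (A * Vm A) (star (Vm A) * Aᴴ) c c
  have hPP : P * P = P := by
    have key : P * P = A * Vm A * diagonal (fun i => c i * c i)
        * (star (Vm A) * Aᴴ) * (A * Vm A * (diagonal (fun i => c i * c i)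
          * (star (Vm A) * Aᴴ))) := by
      rw [hPdef]
      simp only [mul_assoc]
    rw [key,
      sand2 A (A * Vm A * diagonal (fun i => c i * c i))
        (diagonal (fun i => c i * c i) * (star (Vm A) * Aᴴ)),
      dmerge (A * Vm A * diagonal (fun i => c i * c i)) (star (Vm A) * Aᴴ)
        (ev A) (fun i => c i * c i),
      dmerge2 (A * Vm A) (fun i => c i * c i) (fun i => ev A i * (c i * c i)),
      hPdef]
    simp only [hcc]
  have hPH : Pᴴ = P := by
    rw [hPdef]
    simp only [conjTranspose_mul, conjTranspose_conjTranspose, diag_conjT,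
      star_eq_conjTranspose]
    simp only [← mul_assoc]
  refine ⟨U, ?_, ?_⟩
  · intro x
    have h1 : (U *ᵥ x) ⬝ᵥ (U *ᵥ x) = x ⬝ᵥ (P *ᵥ x) := by rw [dp_AA, hUU]
    set Q : Mat3 := 1 - P with hQ
    have hQH : Qᴴ = Q := by rw [hQ, conjTranspose_sub, hPH, conjTranspose_one]
    have hQQ : Qᴴ * Q = Q := by
      rw [hQH, hQ, sub_mul, mul_sub, mul_sub, one_mul, one_mul, mul_one, hPP,
        sub_self, sub_zero]
    have h2 : 0 ≤ x ⬝ᵥ (Q *ᵥ x) := by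
      have hq := dp_AA Q x x
      rw [hQQ] at hq
      rw [← hq]
      exact dp_self_nonneg _
    have h3 : x ⬝ᵥ (Q *ᵥ x) = x ⬝ᵥ x - x ⬝ᵥ (P *ᵥ x) := by
      rw [hQ, sub_mulVec, one_mulVec, dotProduct_sub]
    rw [h1]
    linarith [h2, h3.symm.le]
  · have hUA : U * A = Vm A * diagonal (fun i => c i * ev A i) * star (Vm A) := by
      rw [hU2, sand2' A (Vm A * diagonal c), dmerge2]
    rw [hUA, nn_eq, trace_mul_cycle, Vm_star_mul, one_mul, trace_diagonal]
    exact Finset.sum_congr rfl fun i _ => hcev i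

lemma nuclearNorm_add_le (A B : Mat3) :
    nuclearNorm (A + B) ≤ nuclearNorm A + nuclearNorm B := by
  obtain ⟨U, hU, hUA⟩ := exists_dual (A + B)
  calc nuclearNorm (A + B) = (U * (A + B)).trace := hUA.symm
    _ = (U * A).trace + (U * B).trace := by rw [mul_add, trace_add]
    _ ≤ nuclearNorm A + nuclearNorm B :=
        add_le_add (dual_le A U hU) (dual_le B U hU)

lemma psd_smul {A : Mat3} (hA : A.PosSemidef) {t : ℝ} (ht : 0 ≤ t) :
    (t • A).PosSemidef := by
  rw [posSemidef_iff_dotProduct_mulVec] at hA ⊢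
  constructor
  · have h1 : (t • A)ᴴ = t • Aᴴ := by
      rw [conjTranspose_smul]
      congr 1
    rw [Matrix.IsHermitian, h1, hA.1]
  · intro x
    rw [smul_mulVec, dotProduct_smul, smul_eq_mul]
    exact mul_nonneg ht (hA.2 x)

lemma nuclearNorm_smul (t : ℝ) (ht : 0 ≤ t) (A : Mat3) :
    nuclearNorm (t • A) = t * nuclearNorm A := by
  obtain ⟨U, hU, hUA⟩ := exists_dual (t • A)
  obtain ⟨V, hV, hVA⟩ := exists_dual A
  apply le_antisymm
  · rw [← hUA, mul_smul_comm, trace_smul, smul_eq_mul]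
    exact mul_le_mul_of_nonneg_left (dual_le A U hU) ht
  · have := dual_le (t • A) V hV
    rw [mul_smul_comm, trace_smul, smul_eq_mul, hVA] at this
    exact this

lemma vmv_mul (a b u w : V3) :
    vecMulVec a b * vecMulVec u w = (b ⬝ᵥ u) • vecMulVec a w := by
  ext i j
  simp only [mul_apply, vecMulVec_apply, Matrix.smul_apply, smul_eq_mul, dotProduct,
    Finset.sum_mul]
  exact Finset.sum_congr rfl fun k _ => by ring

lemma vmvH (u v : V3) : (vecMulVec u v)ᴴ = vecMulVec v u := by
  ext i j
  simp [vecMulVec_apply, conjTranspose_apply, mul_comm]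

lemma vmv_mulVec (v x : V3) : vecMulVec v v *ᵥ x = (v ⬝ᵥ x) • v := by
  funext k
  simp only [mulVec, dotProduct, vecMulVec_apply, Pi.smul_apply, smul_eq_mul,
    Finset.sum_mul, Finset.mul_sum]
  exact Finset.sum_congr rfl fun j _ => by ring

lemma psd_vmv (v : V3) : (vecMulVec v v).PosSemidef := by
  rw [posSemidef_iff_dotProduct_mulVec]
  constructor
  · ext i j
    simp [vecMulVec_apply, conjTranspose_apply, mul_comm]
  · intro x
    have hst : star x = x := star_trivial _
    rw [vmv_mulVec, hst, dotProduct_smul, smul_eq_mul, dotProduct_comm]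
    exact mul_self_nonneg _

lemma trace_vmv (u v : V3) : (vecMulVec u v).trace = u ⬝ᵥ v := by
  simp [Matrix.trace, Matrix.diag, vecMulVec_apply, dotProduct]

lemma vmv_mulVec2 (v u x : V3) : vecMulVec v u *ᵥ x = (u ⬝ᵥ x) • v := by
  funext k
  simp only [mulVec, dotProduct, vecMulVec_apply, Pi.smul_apply, smul_eq_mul,
    Finset.sum_mul, Finset.mul_sum]
  exact Finset.sum_congr rfl fun j _ => by ring

lemma nuclearNorm_vmv (u v : V3) :
    nuclearNorm (vecMulVec u v) = Real.sqrt (u ⬝ᵥ u) * Real.sqrt (v ⬝ᵥ v) := by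
  set a := Real.sqrt (u ⬝ᵥ u) with ha'
  set b := Real.sqrt (v ⬝ᵥ v) with hb'
  have ha : a * a = u ⬝ᵥ u := Real.mul_self_sqrt (dp_self_nonneg u)
  have hb : b * b = v ⬝ᵥ v := Real.mul_self_sqrt (dp_self_nonneg v)
  apply le_antisymm
  · obtain ⟨U, hU, hUA⟩ := exists_dual (vecMulVec u v)
    have hm : U * vecMulVec u v = vecMulVec (U *ᵥ u) v := by
      ext i j
      simp only [mul_apply, vecMulVec_apply, mulVec, dotProduct, Finset.sum_mul]
      exact Finset.sum_congr rfl fun k _ => by ring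
    rw [← hUA, hm, trace_vmv]
    calc (U *ᵥ u) ⬝ᵥ v ≤ Real.sqrt ((U *ᵥ u) ⬝ᵥ (U *ᵥ u)) * b := cs3 _ _
      _ ≤ a * b := mul_le_mul_of_nonneg_right (sqrt_dp_mulVec_le U hU u) (Real.sqrt_nonneg _)
  · by_cases h0 : a * b = 0
    · rw [h0]
      have := dual_le (vecMulVec u v) 0 (fun x => by simp [dp_self_nonneg])
      simpa using this
    · set c := (a * b)⁻¹ with hc'
      have hc : c * (a * b) = 1 := inv_mul_cancel₀ h0
      set U : Mat3 := c • vecMulVec v u with hUdef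
      have hU : ∀ x : V3, (U *ᵥ x) ⬝ᵥ (U *ᵥ x) ≤ x ⬝ᵥ x := by
        intro x
        have hUx : U *ᵥ x = (c * (u ⬝ᵥ x)) • v := by
          rw [hUdef, smul_mulVec, vmv_mulVec2, smul_smul]
        have hcs : (u ⬝ᵥ x) ^ 2 ≤ (u ⬝ᵥ u) * (x ⬝ᵥ x) := by
          simp only [dotProduct, Fin.sum_univ_three]
          nlinarith [sq_nonneg (u 0 * x 1 - u 1 * x 0), sq_nonneg (u 0 * x 2 - u 2 * x 0),
            sq_nonneg (u 1 * x 2 - u 2 * x 1)]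
        have key : (c * b) ^ 2 * (u ⬝ᵥ u) = 1 := by
          rw [← ha]
          have e : (c * b) ^ 2 * (a * a) = (c * (a * b)) ^ 2 := by ring
          rw [e, hc, one_pow]
        calc (U *ᵥ x) ⬝ᵥ (U *ᵥ x) = (c * b) ^ 2 * (u ⬝ᵥ x) ^ 2 := by
              rw [hUx]
              simp only [dotProduct_smul, smul_dotProduct, smul_eq_mul]
              rw [← hb]
              ring
          _ ≤ (c * b) ^ 2 * ((u ⬝ᵥ u) * (x ⬝ᵥ x)) :=
              mul_le_mul_of_nonneg_left hcs (sq_nonneg _)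
          _ = x ⬝ᵥ x := by rw [← mul_assoc, key, one_mul]
      have ht : (U * vecMulVec u v).trace = a * b := by
        rw [hUdef, smul_mul_assoc, vmv_mul, trace_smul, trace_smul, trace_vmv, smul_eq_mul,
          smul_eq_mul, ← ha, ← hb]
        have e : c * ((a * a) * (b * b)) = (c * (a * b)) * (a * b) := by ring
        rw [e, hc, one_mul]
      rw [← ht]
      exact dual_le _ U hU

lemma dot3_nonneg (v : V3) : 0 ≤ dot3 v v :=
  Finset.sum_nonneg fun i _ => mul_self_nonneg _

lemma norm3_sq (v : V3) : norm3 v ^ 2 = dot3 v v := Real.sq_sqrt (dot3_nonneg v)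

lemma dot3_comb (a b : ℝ) (hab : a + b = 1) (u w : V3) :
    dot3 (a • u + b • w) (a • u + b • w)
      = a * dot3 u u + b * dot3 w w - a * b * dot3 (w - u) (w - u) := by
  have hb : b = 1 - a := by linarith
  subst hb
  simp only [dot3, Fin.sum_univ_three, Pi.add_apply, Pi.smul_apply, Pi.sub_apply,
    smul_eq_mul]
  ring

lemma dot3_flip (u w : V3) : dot3 (u - w) (u - w) = dot3 (w - u) (w - u) := by
  simp only [dot3, Fin.sum_univ_three, Pi.sub_apply]
  ring

lemma nuclearNorm_outer (u v : V3) :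
    nuclearNorm (outer u v) = norm3 u * norm3 v := nuclearNorm_vmv u v

theorem stmt8 (r s p : ℝ) (hr : 0 < r) (hs : 0 < s)
    (γ : ℝ) (hγ : γ ∈ Set.Icc (0 : ℝ) 1) :
    ConvexOn ℝ Set.univ (fun z : Z =>
      γ * (norm3 z.1 ^ 2 - r ^ 2) + (1 - γ) * (norm3 z.2.1 ^ 2 - s ^ 2) +
        2 * Real.sqrt (γ * (1 - γ)) * nuclearNorm (M0 p z)) := by
  obtain ⟨hγ0, hγ1⟩ := hγ
  have hγ1' : 0 ≤ 1 - γ := by linarith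
  refine ⟨convex_univ, ?_⟩
  intro z1 _ z2 _ a b ha hb hab
  simp only [smul_eq_mul]
  have hfst : (a • z1 + b • z2).1 = a • z1.1 + b • z2.1 := rfl
  have hsnd : (a • z1 + b • z2).2.1 = a • z1.2.1 + b • z2.2.1 := rfl
  have hg0 : 0 ≤ Real.sqrt (γ * (1 - γ)) := Real.sqrt_nonneg _
  have hQ : norm3 (a • z1 + b • z2).1 ^ 2
      = a * norm3 z1.1 ^ 2 + b * norm3 z2.1 ^ 2
        - a * b * dot3 (z2.1 - z1.1) (z2.1 - z1.1) := by
    rw [norm3_sq, norm3_sq, norm3_sq, hfst, dot3_comb a b hab]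
  have hR : norm3 (a • z1 + b • z2).2.1 ^ 2
      = a * norm3 z1.2.1 ^ 2 + b * norm3 z2.2.1 ^ 2
        - a * b * dot3 (z1.2.1 - z2.2.1) (z1.2.1 - z2.2.1) := by
    rw [norm3_sq, norm3_sq, norm3_sq, hsnd, dot3_comb a b hab,
      dot3_flip z1.2.1 z2.2.1]
  have hM : M0 p (a • z1 + b • z2) = a • M0 p z1 + b • M0 p z2
      + (a * b) • outer (z2.1 - z1.1) (z1.2.1 - z2.2.1) := by
    have hb' : b = 1 - a := by linarith
    subst hb'
    ext i j
    simp only [M0, outer, vecMulVec_apply, Matrix.add_apply, Matrix.sub_apply,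
      Matrix.smul_apply, Matrix.one_apply, Prod.fst_add, Prod.snd_add,
      Prod.smul_fst, Prod.smul_snd, Pi.add_apply, Pi.smul_apply, Pi.sub_apply,
      smul_eq_mul]
    ring
  have hnn : nuclearNorm (M0 p (a • z1 + b • z2))
      ≤ a * nuclearNorm (M0 p z1) + b * nuclearNorm (M0 p z2)
        + a * b * (norm3 (z2.1 - z1.1) * norm3 (z1.2.1 - z2.2.1)) := by
    rw [hM]
    have t1 := nuclearNorm_add_le (a • M0 p z1 + b • M0 p z2)
      ((a * b) • outer (z2.1 - z1.1) (z1.2.1 - z2.2.1))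
    have t2 := nuclearNorm_add_le (a • M0 p z1) (b • M0 p z2)
    rw [nuclearNorm_smul a ha, nuclearNorm_smul b hb] at t2
    rw [nuclearNorm_smul (a * b) (mul_nonneg ha hb), nuclearNorm_outer] at t1
    linarith
  have hkey : 2 * Real.sqrt (γ * (1 - γ))
        * (norm3 (z2.1 - z1.1) * norm3 (z1.2.1 - z2.2.1))
      ≤ γ * dot3 (z2.1 - z1.1) (z2.1 - z1.1)
        + (1 - γ) * dot3 (z1.2.1 - z2.2.1) (z1.2.1 - z2.2.1) := by
    set X := dot3 (z2.1 - z1.1) (z2.1 - z1.1) with hX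
    set Y := dot3 (z1.2.1 - z2.2.1) (z1.2.1 - z2.2.1) with hY
    have hX0 : 0 ≤ X := dot3_nonneg _
    have hY0 : 0 ≤ Y := dot3_nonneg _
    have e1 : Real.sqrt (γ * (1 - γ)) * (Real.sqrt X * Real.sqrt Y)
        = Real.sqrt (γ * X) * Real.sqrt ((1 - γ) * Y) := by
      rw [Real.sqrt_mul hγ0, Real.sqrt_mul hγ0 X, Real.sqrt_mul hγ1' Y]
      ring
    have e2 := two_mul_le_add_sq (Real.sqrt (γ * X)) (Real.sqrt ((1 - γ) * Y))
    rw [Real.sq_sqrt (mul_nonneg hγ0 hX0), Real.sq_sqrt (mul_nonneg hγ1' hY0)] at e2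
    have e3 : norm3 (z2.1 - z1.1) = Real.sqrt X := rfl
    have e4 : norm3 (z1.2.1 - z2.2.1) = Real.sqrt Y := rfl
    rw [e3, e4]
    nlinarith [e1, e2]
  have h1 : 2 * Real.sqrt (γ * (1 - γ)) * nuclearNorm (M0 p (a • z1 + b • z2))
      ≤ 2 * Real.sqrt (γ * (1 - γ)) * (a * nuclearNorm (M0 p z1)
        + b * nuclearNorm (M0 p z2)
        + a * b * (norm3 (z2.1 - z1.1) * norm3 (z1.2.1 - z2.2.1))) :=
    mul_le_mul_of_nonneg_left hnn (by positivity)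
  have h2 : (a * b) * (2 * Real.sqrt (γ * (1 - γ))
        * (norm3 (z2.1 - z1.1) * norm3 (z1.2.1 - z2.2.1)))
      ≤ (a * b) * (γ * dot3 (z2.1 - z1.1) (z2.1 - z1.1)
        + (1 - γ) * dot3 (z1.2.1 - z2.2.1) (z1.2.1 - z2.2.1)) :=
    mul_le_mul_of_nonneg_left hkey (mul_nonneg ha hb)
  have hQγ : γ * norm3 (a • z1 + b • z2).1 ^ 2
      = γ * (a * norm3 z1.1 ^ 2 + b * norm3 z2.1 ^ 2
        - a * b * dot3 (z2.1 - z1.1) (z2.1 - z1.1)) := by rw [hQ]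
  have hRγ : (1 - γ) * norm3 (a • z1 + b • z2).2.1 ^ 2
      = (1 - γ) * (a * norm3 z1.2.1 ^ 2 + b * norm3 z2.2.1 ^ 2
        - a * b * dot3 (z1.2.1 - z2.2.1) (z1.2.1 - z2.2.1)) := by rw [hR]
  have habr : a * (γ * r ^ 2) + b * (γ * r ^ 2) = γ * r ^ 2 := by
    rw [← add_mul, hab, one_mul]
  have habs : a * ((1 - γ) * s ^ 2) + b * ((1 - γ) * s ^ 2) = (1 - γ) * s ^ 2 := by
    rw [← add_mul, hab, one_mul]
  linarith [h1, h2, hQγ, hRγ, habr, habs]
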